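/- Let $K_1 \subseteq \mathbb{R}^m$, $K_2 \subseteq \mathbb{R}^p$, $K_3 \subseteq \mathbb{R}^n$ be compact sets, let $(H_\varepsilon)_{\varepsilon \in (0,1]}$ be a negligible net of smooth functions on $\mathbb{R}^m \times \mathbb{R}^p$ with $\mathrm{supp}\, H_\varepsilon \subseteq K_1 \times K_2$ for all $\varepsilon$, and let $(K_\varepsilon)_{\varepsilon \in (0,1]}$ be a moderate net of smooth functions on $\mathbb{R}^p \times \mathbb{R}^n$ with $\mathrm{supp}\, K_\varepsilon \subseteq K_2 \times K_3$ for all $\varepsilon$. Then the net $(L_\varepsilon)$ defined by $L_\varepsilon(x,y) = \int_{K_2} H_\varepsilon(x,\xi) K_\varepsilon(\xi,y)\, \mathrm{d}\xi$ is a negligible net of smooth functions on $\mathbb{R}^m \times \mathbb{R}^n$. -/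

import Mathlib

open MeasureTheory Set Filter

noncomputable def dirDeriv {E : Type*} [NormedAddCommGroup E] [NormedSpace ℝ E]
    (v : E) (f : E → ℂ) : E → ℂ := fun x => fderiv ℝ f x v

noncomputable def itDeriv {E : Type*} [NormedAddCommGroup E] [NormedSpace ℝ E] :
    List E → (E → ℂ) → E → ℂ
  | [] => fun f => f
  | v :: vs => fun f => itDeriv vs (dirDeriv v f)

/-- The standard basis directions of the product space `ℝ^m × ℝ^n`. -/
def prodDirs (m n : ℕ) : Set ((Fin m → ℝ) × (Fin n → ℝ)) :=
  {v | (∃ i, v = (Pi.single i (1:ℝ), 0)) ∨ ∃ j, v = (0, Pi.single j (1:ℝ))}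

/-- The standard basis directions of `ℝ^d`. -/
def stdDirs (d : ℕ) : Set (Fin d → ℝ) := {v | ∃ i, v = Pi.single i (1:ℝ)}

/-- The seminorm `p_{A,l}(f)`: the sup over `x ∈ A` and over all partial derivatives
(iterated directional derivatives along basis directions from `B`) of order `≤ l`. -/
noncomputable def pSemi {E : Type*} [NormedAddCommGroup E] [NormedSpace ℝ E]
    (B A : Set E) (l : ℕ) (f : E → ℂ) : ℝ :=
  sSup {r | ∃ vs : List E, vs.length ≤ l ∧ (∀ v ∈ vs, v ∈ B) ∧ ∃ x ∈ A, r = ‖itDeriv vs f x‖}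

/-- A net `(f_ε)_{ε ∈ (0,1]}` is moderate if every seminorm grows at most
polynomially in `1/ε` as `ε → 0`. -/
def IsModerate {E : Type*} [NormedAddCommGroup E] [NormedSpace ℝ E]
    (B : Set E) (f : ℝ → E → ℂ) : Prop :=
  ∀ A : Set E, IsCompact A → ∀ l : ℕ, ∃ q : ℕ, ∃ C > (0:ℝ), ∃ ε₀ ∈ Ioc (0:ℝ) 1,
    ∀ ε ∈ Ioc (0:ℝ) 1, ε ≤ ε₀ → pSemi B A l (f ε) ≤ C * ε ^ (-(q:ℤ))

/-- A net `(f_ε)_{ε ∈ (0,1]}` is negligible if every seminorm is `O(ε^p)` for all `p`. -/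
def IsNegligible {E : Type*} [NormedAddCommGroup E] [NormedSpace ℝ E]
    (B : Set E) (f : ℝ → E → ℂ) : Prop :=
  ∀ A : Set E, IsCompact A → ∀ l : ℕ, ∀ p : ℕ, ∃ C > (0:ℝ), ∃ ε₀ ∈ Ioc (0:ℝ) 1,
    ∀ ε ∈ Ioc (0:ℝ) 1, ε ≤ ε₀ → pSemi B A l (f ε) ≤ C * ε ^ p

section Aux

open scoped Convolution

variable {E : Type*} [NormedAddCommGroup E] [NormedSpace ℝ E]

lemma contDiff_dirDeriv (v : E) {f : E → ℂ} (hf : ContDiff ℝ (⊤:ℕ∞) f) :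
    ContDiff ℝ (⊤:ℕ∞) (dirDeriv v f) :=
  (hf.fderiv_right (by exact_mod_cast le_top)).clm_apply contDiff_const

lemma contDiff_itDeriv (vs : List E) {f : E → ℂ} (hf : ContDiff ℝ (⊤:ℕ∞) f) :
    ContDiff ℝ (⊤:ℕ∞) (itDeriv vs f) := by
  induction vs generalizing f with
  | nil => exact hf
  | cons v vs ih => exact ih (contDiff_dirDeriv v hf)

lemma eventually_zero_of_not_mem {f : E → ℂ} {s : Set E} (hs : IsClosed s)
    (hf : Function.support f ⊆ s) {x : E} (hx : x ∉ s) : f =ᶠ[nhds x] 0 := by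
  filter_upwards [hs.isOpen_compl.mem_nhds hx] with y hy
  by_contra h
  exact hy (hf h)

lemma support_dirDeriv {f : E → ℂ} {s : Set E} (hs : IsClosed s)
    (hf : Function.support f ⊆ s) (v : E) : Function.support (dirDeriv v f) ⊆ s := by
  intro x hx
  by_contra hxs
  have h0 : fderiv ℝ f x = 0 := by
    rw [(eventually_zero_of_not_mem hs hf hxs).fderiv_eq]
    exact fderiv_const_apply 0
  simp [dirDeriv, h0] at hx

lemma support_itDeriv (vs : List E) {f : E → ℂ} {s : Set E} (hs : IsClosed s)
    (hf : Function.support f ⊆ s) : Function.support (itDeriv vs f) ⊆ s := by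
  induction vs generalizing f with
  | nil => exact hf
  | cons v vs ih => exact ih (support_dirDeriv hs hf v)

lemma contDiff_param_integral {p : ℕ} {Z : Type*} [NormedAddCommGroup Z] [NormedSpace ℝ Z]
    {M : Z → (Fin p → ℝ) → ℂ} {k : Set (Fin p → ℝ)} (hk : IsCompact k)
    (hM : ContDiff ℝ (⊤:ℕ∞) (Function.uncurry M))
    (hsupp : ∀ z ξ, ξ ∉ k → M z ξ = 0) :
    ContDiff ℝ (⊤:ℕ∞) (fun z => ∫ ξ, M z ξ) := by
  have key : ContDiffOn ℝ (⊤:ℕ∞)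
      (fun z : Z => (((fun _ => (1:ℝ)) ⋆[ContinuousLinearMap.lsmul ℝ ℝ, volume]
        (fun u => M z (-u))) (0 : Fin p → ℝ))) univ := by
    apply contDiffOn_convolution_right_with_param_comp
      (L := ContinuousLinearMap.lsmul ℝ ℝ) (g := fun z u => M z (-u))
      (k := -k) (v := fun _ => (0 : Fin p → ℝ)) contDiffOn_const isOpen_univ hk.neg
    · intro z x _ hx
      exact hsupp z (-x) (by simpa [Set.mem_neg] using hx)
    · exact locallyIntegrable_const _
    · exact ((hM.comp ((contDiff_fst).prodMk (contDiff_snd.neg)))).contDiffOn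
  rw [← contDiffOn_univ]
  apply key.congr
  intro z _
  rw [convolution_def]
  simp

lemma fderiv_zero_off_supp {p : ℕ} {Z : Type*} [NormedAddCommGroup Z] [NormedSpace ℝ Z]
    {M : Z → (Fin p → ℝ) → ℂ} {k : Set (Fin p → ℝ)} (hk : IsClosed k)
    (hsupp : ∀ z ξ, ξ ∉ k → M z ξ = 0) {z : Z} {ξ : Fin p → ℝ} (hξ : ξ ∉ k) :
    fderiv ℝ (Function.uncurry M) (z, ξ) = 0 := by
  have hev : Function.uncurry M =ᶠ[nhds (z, ξ)] 0 := by
    filter_upwards [prod_mem_nhds univ_mem (hk.isOpen_compl.mem_nhds hξ)] with q hq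
    exact hsupp q.1 q.2 hq.2
  rw [hev.fderiv_eq]
  exact fderiv_const_apply 0

set_option synthInstance.maxHeartbeats 1000000 in
lemma hasFDerivAt_param_integral {p : ℕ} {Z : Type*} [NormedAddCommGroup Z] [NormedSpace ℝ Z]
    [ProperSpace Z]
    {M : Z → (Fin p → ℝ) → ℂ} {k : Set (Fin p → ℝ)} (hk : IsCompact k)
    (hM : ContDiff ℝ (⊤:ℕ∞) (Function.uncurry M))
    (hsupp : ∀ z ξ, ξ ∉ k → M z ξ = 0) (z₀ : Z) :
    HasFDerivAt (fun z => ∫ ξ, M z ξ)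
      (∫ ξ, (fderiv ℝ (Function.uncurry M) (z₀, ξ)).comp
        (ContinuousLinearMap.inl ℝ Z (Fin p → ℝ))) z₀ := by
  set F' : Z → (Fin p → ℝ) → Z →L[ℝ] ℂ := fun z ξ =>
    (fderiv ℝ (Function.uncurry M) (z, ξ)).comp (ContinuousLinearMap.inl ℝ Z (Fin p → ℝ)) with hF'
  have hfd : Continuous (fderiv ℝ (Function.uncurry M)) :=
    hM.continuous_fderiv (by simp)
  have hF'c : Continuous (fun q : Z × (Fin p → ℝ) => F' q.1 q.2) :=
    Continuous.clm_comp (by fun_prop) continuous_const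
  have hF'0 : ∀ z ξ, ξ ∉ k → F' z ξ = 0 := by
    intro z ξ hξ
    simp [hF', fderiv_zero_off_supp hk.isClosed hsupp hξ]
  have hdiff : ∀ (z : Z) (ξ : Fin p → ℝ), HasFDerivAt (fun z => M z ξ) (F' z ξ) z := by
    intro z ξ
    have h1 : HasFDerivAt (Function.uncurry M) (fderiv ℝ (Function.uncurry M) (z, ξ)) (z, ξ) :=
      (hM.differentiable (by simp)).differentiableAt.hasFDerivAt
    have h2 : HasFDerivAt (fun w : Z => (w, ξ)) (ContinuousLinearMap.inl ℝ Z (Fin p → ℝ)) z :=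
      hasFDerivAt_prodMk_left z ξ
    exact h1.comp z h2
  have hMzc : ∀ z : Z, Continuous (M z) := fun z =>
    hM.continuous.comp (continuous_const.prodMk continuous_id)
  obtain ⟨C, hC⟩ := ((isCompact_closedBall z₀ 1).prod hk).exists_bound_of_continuousOn
    hF'c.continuousOn
  apply hasFDerivAt_integral_of_dominated_of_fderiv_le (F' := F')
    (bound := k.indicator fun _ => max C 0) (Metric.ball_mem_nhds z₀ zero_lt_one)
  · exact Eventually.of_forall fun z => (hMzc z).aestronglyMeasurable
  · exact ((hMzc z₀)).integrable_of_hasCompactSupport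
      (HasCompactSupport.intro hk fun ξ hξ => hsupp z₀ ξ hξ)
  · exact (hF'c.comp (continuous_const.prodMk continuous_id)).aestronglyMeasurable
  · refine Eventually.of_forall fun ξ => fun z hz => ?_
    by_cases hξ : ξ ∈ k
    · rw [indicator_of_mem hξ]
      exact le_trans (hC (z, ξ) ⟨Metric.ball_subset_closedBall hz, hξ⟩) (le_max_left _ _)
    · rw [indicator_of_notMem hξ, hF'0 z ξ hξ]
      simp
  · exact (integrable_indicator_iff hk.measurableSet).2
      (integrableOn_const hk.measure_lt_top.ne)
  · exact Eventually.of_forall fun ξ z _ => hdiff z ξ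

set_option synthInstance.maxHeartbeats 1000000 in
lemma dirDeriv_param_integral {p : ℕ} {Z : Type*} [NormedAddCommGroup Z] [NormedSpace ℝ Z]
    [ProperSpace Z]
    {M : Z → (Fin p → ℝ) → ℂ} {k : Set (Fin p → ℝ)} (hk : IsCompact k)
    (hM : ContDiff ℝ (⊤:ℕ∞) (Function.uncurry M))
    (hsupp : ∀ z ξ, ξ ∉ k → M z ξ = 0) (v : Z) :
    dirDeriv v (fun z => ∫ ξ, M z ξ) =
      fun z₀ => ∫ ξ, fderiv ℝ (Function.uncurry M) (z₀, ξ) (v, 0) := by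
  funext z₀
  have h := (hasFDerivAt_param_integral hk hM hsupp z₀).fderiv
  have hfd : Continuous (fderiv ℝ (Function.uncurry M)) :=
    hM.continuous_fderiv (by simp)
  have hint : Integrable (fun ξ => (fderiv ℝ (Function.uncurry M) (z₀, ξ)).comp
      (ContinuousLinearMap.inl ℝ Z (Fin p → ℝ))) volume := by
    apply Continuous.integrable_of_hasCompactSupport
    · exact Continuous.clm_comp (by fun_prop) continuous_const
    · apply HasCompactSupport.intro hk
      intro ξ hξ
      simp [fderiv_zero_off_supp hk.isClosed hsupp hξ]
  show fderiv ℝ (fun z => ∫ ξ, M z ξ) z₀ v = _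
  rw [h, ContinuousLinearMap.integral_apply hint]
  simp

lemma fderiv_prodmul_apply {m p n : ℕ}
    {H : (Fin m → ℝ) × (Fin p → ℝ) → ℂ} (hH : ContDiff ℝ (⊤:ℕ∞) H)
    {K : (Fin p → ℝ) × (Fin n → ℝ) → ℂ} (hK : ContDiff ℝ (⊤:ℕ∞) K)
    (z : (Fin m → ℝ) × (Fin n → ℝ)) (ξ : Fin p → ℝ) (v : (Fin m → ℝ) × (Fin n → ℝ)) :
    fderiv ℝ (Function.uncurry
        (fun (z : (Fin m → ℝ) × (Fin n → ℝ)) (ξ : Fin p → ℝ) => H (z.1, ξ) * K (ξ, z.2)))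
        (z, ξ) (v, (0 : Fin p → ℝ))
      = fderiv ℝ H (z.1, ξ) (v.1, 0) * K (ξ, z.2)
        + H (z.1, ξ) * fderiv ℝ K (ξ, z.2) (0, v.2) := by
  have hHd : HasFDerivAt H (fderiv ℝ H (z.1, ξ)) (z.1, ξ) :=
    (hH.differentiable (by simp)).differentiableAt.hasFDerivAt
  have hKd : HasFDerivAt K (fderiv ℝ K (ξ, z.2)) (ξ, z.2) :=
    (hK.differentiable (by simp)).differentiableAt.hasFDerivAt
  have hφ : HasFDerivAt
      (fun q : ((Fin m → ℝ) × (Fin n → ℝ)) × (Fin p → ℝ) => (q.1.1, q.2))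
      (((ContinuousLinearMap.fst ℝ (Fin m → ℝ) (Fin n → ℝ)).comp
          (ContinuousLinearMap.fst ℝ ((Fin m → ℝ) × (Fin n → ℝ)) (Fin p → ℝ))).prod
        (ContinuousLinearMap.snd ℝ ((Fin m → ℝ) × (Fin n → ℝ)) (Fin p → ℝ))) (z, ξ) :=
    ((hasFDerivAt_fst.comp (z, ξ) hasFDerivAt_fst)).prodMk hasFDerivAt_snd
  have hψ : HasFDerivAt
      (fun q : ((Fin m → ℝ) × (Fin n → ℝ)) × (Fin p → ℝ) => (q.2, q.1.2))
      ((ContinuousLinearMap.snd ℝ ((Fin m → ℝ) × (Fin n → ℝ)) (Fin p → ℝ)).prod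
        ((ContinuousLinearMap.snd ℝ (Fin m → ℝ) (Fin n → ℝ)).comp
          (ContinuousLinearMap.fst ℝ ((Fin m → ℝ) × (Fin n → ℝ)) (Fin p → ℝ)))) (z, ξ) :=
    hasFDerivAt_snd.prodMk ((hasFDerivAt_snd.comp (z, ξ) hasFDerivAt_fst))
  have h1 : HasFDerivAt (fun q : ((Fin m → ℝ) × (Fin n → ℝ)) × (Fin p → ℝ) => H (q.1.1, q.2))
      ((fderiv ℝ H (z.1, ξ)).comp _) (z, ξ) := hHd.comp (z, ξ) hφ
  have h2 : HasFDerivAt (fun q : ((Fin m → ℝ) × (Fin n → ℝ)) × (Fin p → ℝ) => K (q.2, q.1.2))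
      ((fderiv ℝ K (ξ, z.2)).comp _) (z, ξ) := hKd.comp (z, ξ) hψ
  have hmul := h1.mul' h2
  have heq := hmul.fderiv
  rw [show (Function.uncurry
        (fun (z : (Fin m → ℝ) × (Fin n → ℝ)) (ξ : Fin p → ℝ) => H (z.1, ξ) * K (ξ, z.2)))
      = ((fun q : ((Fin m → ℝ) × (Fin n → ℝ)) × (Fin p → ℝ) => H (q.1.1, q.2)) * fun q : ((Fin m → ℝ) × (Fin n → ℝ)) × (Fin p → ℝ) => K (q.2, q.1.2))
      from rfl, heq]
  simp [ContinuousLinearMap.smulRight_apply, smul_eq_mul]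
  ring

lemma contDiff_uncurry_prodmul {m p n : ℕ}
    {H : (Fin m → ℝ) × (Fin p → ℝ) → ℂ} (hH : ContDiff ℝ (⊤:ℕ∞) H)
    {K : (Fin p → ℝ) × (Fin n → ℝ) → ℂ} (hK : ContDiff ℝ (⊤:ℕ∞) K) :
    ContDiff ℝ (⊤:ℕ∞) (Function.uncurry
      (fun (z : (Fin m → ℝ) × (Fin n → ℝ)) (ξ : Fin p → ℝ) => H (z.1, ξ) * K (ξ, z.2))) := by
  exact (hH.comp ((contDiff_fst.fst).prodMk contDiff_snd)).mul
    (hK.comp (contDiff_snd.prodMk contDiff_fst.snd))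

lemma prodmul_zero_off {m p n : ℕ} {S₁ : Set (Fin m → ℝ)} {S₂ : Set (Fin p → ℝ)}
    {H : (Fin m → ℝ) × (Fin p → ℝ) → ℂ} (hHs : Function.support H ⊆ S₁ ×ˢ S₂)
    {K : (Fin p → ℝ) × (Fin n → ℝ) → ℂ} :
    ∀ (z : (Fin m → ℝ) × (Fin n → ℝ)) (ξ : Fin p → ℝ), ξ ∉ S₂ →
      H (z.1, ξ) * K (ξ, z.2) = 0 := by
  intro z ξ hξ
  have : H (z.1, ξ) = 0 := by
    by_contra h
    exact hξ (hHs h).2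
  simp [this]

set_option synthInstance.maxHeartbeats 1000000 in
lemma dirDeriv_step {m p n : ℕ} {S₁ : Set (Fin m → ℝ)} {S₂ : Set (Fin p → ℝ)}
    (hS₂ : IsCompact S₂)
    {H : (Fin m → ℝ) × (Fin p → ℝ) → ℂ} (hH : ContDiff ℝ (⊤:ℕ∞) H)
    (hHs : Function.support H ⊆ S₁ ×ˢ S₂)
    {K : (Fin p → ℝ) × (Fin n → ℝ) → ℂ} (hK : ContDiff ℝ (⊤:ℕ∞) K)
    (v : (Fin m → ℝ) × (Fin n → ℝ)) :
    dirDeriv v (fun z : (Fin m → ℝ) × (Fin n → ℝ) => ∫ ξ, H (z.1, ξ) * K (ξ, z.2)) =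
      fun z => ∫ ξ, (dirDeriv (v.1, (0 : Fin p → ℝ)) H (z.1, ξ) * K (ξ, z.2)
        + H (z.1, ξ) * dirDeriv ((0 : Fin p → ℝ), v.2) K (ξ, z.2)) := by
  rw [dirDeriv_param_integral hS₂ (contDiff_uncurry_prodmul hH hK) (prodmul_zero_off hHs) v]
  funext z₀
  apply integral_congr_ae
  apply Eventually.of_forall
  intro ξ
  exact fderiv_prodmul_apply hH hK z₀ ξ v

end Aux

lemma main_ind {m p n : ℕ} {S₁ : Set (Fin m → ℝ)} {S₂ : Set (Fin p → ℝ)}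
    (hS₁ : IsCompact S₁) (hS₂ : IsCompact S₂)
    (vs : List ((Fin m → ℝ) × (Fin n → ℝ))) (hvs : ∀ v ∈ vs, v ∈ prodDirs m n) :
    ∀ (H : (Fin m → ℝ) × (Fin p → ℝ) → ℂ), ContDiff ℝ (⊤:ℕ∞) H →
      Function.support H ⊆ S₁ ×ˢ S₂ →
    ∀ (K : (Fin p → ℝ) × (Fin n → ℝ) → ℂ), ContDiff ℝ (⊤:ℕ∞) K →
    ∃ (as : List ((Fin m → ℝ) × (Fin p → ℝ))) (bs : List ((Fin p → ℝ) × (Fin n → ℝ))),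
      as.length + bs.length = vs.length ∧ (∀ a ∈ as, a ∈ prodDirs m p) ∧
      (∀ b ∈ bs, b ∈ prodDirs p n) ∧
      itDeriv vs (fun z : (Fin m → ℝ) × (Fin n → ℝ) => ∫ ξ, H (z.1, ξ) * K (ξ, z.2))
        = fun z => ∫ ξ, itDeriv as H (z.1, ξ) * itDeriv bs K (ξ, z.2) := by
  induction vs with
  | nil =>
    intro H hH hHs K hK
    exact ⟨[], [], rfl, by simp, by simp, rfl⟩
  | cons v vs ih =>
    intro H hH hHs K hK
    have hv := hvs v List.mem_cons_self
    have hvs' : ∀ w ∈ vs, w ∈ prodDirs m n := fun w hw => hvs w (List.mem_cons_of_mem _ hw)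
    have hstep := dirDeriv_step hS₂ hH hHs hK v
    rcases hv with ⟨i, rfl⟩ | ⟨j, rfl⟩
    · have hzero : (fun z : (Fin m → ℝ) × (Fin n → ℝ) =>
          ∫ ξ, (dirDeriv (((Pi.single i (1:ℝ), (0:Fin n → ℝ)) :
              (Fin m → ℝ) × (Fin n → ℝ)).1, (0 : Fin p → ℝ)) H (z.1, ξ) * K (ξ, z.2)
            + H (z.1, ξ) * dirDeriv ((0 : Fin p → ℝ),
              ((Pi.single i (1:ℝ), (0: Fin n → ℝ)) : (Fin m → ℝ) × (Fin n → ℝ)).2) K (ξ, z.2)))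
          = fun z => ∫ ξ,
            dirDeriv (Pi.single i (1:ℝ), (0 : Fin p → ℝ)) H (z.1, ξ) * K (ξ, z.2) := by
        funext z
        congr 1
        funext ξ
        simp [dirDeriv, Prod.mk_zero_zero]
      have hH1 : ContDiff ℝ (⊤:ℕ∞) (dirDeriv (Pi.single i (1:ℝ), (0 : Fin p → ℝ)) H) :=
        contDiff_dirDeriv _ hH
      have hH1s : Function.support (dirDeriv (Pi.single i (1:ℝ), (0 : Fin p → ℝ)) H)
          ⊆ S₁ ×ˢ S₂ := support_dirDeriv (hS₁.isClosed.prod hS₂.isClosed) hHs _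
      obtain ⟨as, bs, hlen, has, hbs, heq⟩ := ih hvs' _ hH1 hH1s K hK
      refine ⟨(Pi.single i (1:ℝ), (0 : Fin p → ℝ)) :: as, bs, by simp only [List.length_cons]; omega,
        ?_, hbs, ?_⟩
      · intro a ha
        rcases List.mem_cons.1 ha with rfl | ha
        · exact Or.inl ⟨i, rfl⟩
        · exact has a ha
      · show itDeriv vs (dirDeriv _ _) = _
        rw [hstep, hzero]
        exact heq
    · have hzero : (fun z : (Fin m → ℝ) × (Fin n → ℝ) =>
          ∫ ξ, (dirDeriv ((((0:Fin m → ℝ), Pi.single j (1:ℝ)) :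
              (Fin m → ℝ) × (Fin n → ℝ)).1, (0 : Fin p → ℝ)) H (z.1, ξ) * K (ξ, z.2)
            + H (z.1, ξ) * dirDeriv ((0 : Fin p → ℝ),
              (((0:Fin m → ℝ), Pi.single j (1:ℝ)) : (Fin m → ℝ) × (Fin n → ℝ)).2) K (ξ, z.2)))
          = fun z => ∫ ξ,
            H (z.1, ξ) * dirDeriv ((0 : Fin p → ℝ), Pi.single j (1:ℝ)) K (ξ, z.2) := by
        funext z
        congr 1
        funext ξ
        simp [dirDeriv, Prod.mk_zero_zero]
      have hK1 : ContDiff ℝ (⊤:ℕ∞) (dirDeriv ((0 : Fin p → ℝ), Pi.single j (1:ℝ)) K) :=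
        contDiff_dirDeriv _ hK
      obtain ⟨as, bs, hlen, has, hbs, heq⟩ := ih hvs' H hH hHs _ hK1
      refine ⟨as, ((0 : Fin p → ℝ), Pi.single j (1:ℝ)) :: bs, by simp only [List.length_cons]; omega,
        has, ?_, ?_⟩
      · intro b hb
        rcases List.mem_cons.1 hb with rfl | hb
        · exact Or.inr ⟨j, rfl⟩
        · exact hbs b hb
      · show itDeriv vs (dirDeriv _ _) = _
        rw [hstep, hzero]
        exact heq

section PSemiAux

variable {E : Type*} [NormedAddCommGroup E] [NormedSpace ℝ E]

lemma pSemi_nonneg (B A : Set E) (l : ℕ) (f : E → ℂ) : 0 ≤ pSemi B A l f := by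
  apply Real.sSup_nonneg
  rintro r ⟨vs, _, _, x, _, rfl⟩
  exact norm_nonneg _

lemma finite_lists {B : Set E} (hB : B.Finite) (l : ℕ) :
    {vs : List E | vs.length ≤ l ∧ ∀ v ∈ vs, v ∈ B}.Finite := by
  induction l with
  | zero =>
    apply Set.Finite.subset (Set.finite_singleton ([] : List E))
    rintro vs ⟨h1, _⟩
    simp [List.length_eq_zero_iff.1 (Nat.le_zero.1 h1)]
  | succ l ih =>
    apply Set.Finite.subset (Set.Finite.insert [] (Set.Finite.image2 List.cons hB ih))
    rintro vs ⟨h1, h2⟩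
    cases vs with
    | nil => exact Set.mem_insert _ _
    | cons v t =>
      refine Set.mem_insert_iff.2 (Or.inr (Set.mem_image2.2 ⟨v, h2 v List.mem_cons_self,
        t, ⟨?_, fun w hw => h2 w (List.mem_cons_of_mem _ hw)⟩, rfl⟩))
      simpa [Nat.succ_le_succ_iff] using h1

lemma bddAbove_pSemiSet {B A : Set E} (hB : B.Finite) (hA : IsCompact A) (l : ℕ)
    {f : E → ℂ} (hf : ContDiff ℝ (⊤:ℕ∞) f) :
    BddAbove {r | ∃ vs : List E, vs.length ≤ l ∧ (∀ v ∈ vs, v ∈ B) ∧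
      ∃ x ∈ A, r = ‖itDeriv vs f x‖} := by
  have hT := finite_lists hB l
  apply BddAbove.mono (t := ⋃ vs ∈ {vs : List E | vs.length ≤ l ∧ ∀ v ∈ vs, v ∈ B},
    (fun x => ‖itDeriv vs f x‖) '' A)
  · rintro r ⟨vs, h1, h2, x, hx, rfl⟩
    exact Set.mem_biUnion ⟨h1, h2⟩ ⟨x, hx, rfl⟩
  · rw [hT.bddAbove_biUnion]
    intro vs _
    exact (hA.image (contDiff_itDeriv vs hf).continuous.norm).bddAbove

lemma le_pSemi {B A : Set E} (hB : B.Finite) (hA : IsCompact A) {l : ℕ} {f : E → ℂ}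
    (hf : ContDiff ℝ (⊤:ℕ∞) f) {vs : List E} (hlen : vs.length ≤ l)
    (hmem : ∀ v ∈ vs, v ∈ B) {x : E} (hx : x ∈ A) :
    ‖itDeriv vs f x‖ ≤ pSemi B A l f :=
  le_csSup (bddAbove_pSemiSet hB hA l hf) ⟨vs, hlen, hmem, x, hx, rfl⟩

lemma prodDirs_finite (m n : ℕ) : (prodDirs m n).Finite := by
  apply Set.Finite.subset
    ((Set.finite_range (fun i : Fin m => ((Pi.single i (1:ℝ)), (0 : Fin n → ℝ)))).union
      (Set.finite_range (fun j : Fin n => ((0 : Fin m → ℝ), Pi.single j (1:ℝ)))))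
  rintro v (⟨i, rfl⟩ | ⟨j, rfl⟩)
  · exact Or.inl ⟨i, rfl⟩
  · exact Or.inr ⟨j, rfl⟩

end PSemiAux

/-- If the net `(H_ε)` is negligible and `(K_ε)` is moderate (both nets of smooth
compactly supported kernels), then the composed net of kernels is negligible. -/
theorem composed_net_of_kernels_is_negligible
    {m p n : ℕ} (S₁ : Set (Fin m → ℝ)) (S₂ : Set (Fin p → ℝ)) (S₃ : Set (Fin n → ℝ))
    (hS₁ : IsCompact S₁) (hS₂ : IsCompact S₂) (hS₃ : IsCompact S₃)
    (H : ℝ → (Fin m → ℝ) × (Fin p → ℝ) → ℂ)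
    (hHsm : ∀ ε ∈ Ioc (0:ℝ) 1, ContDiff ℝ (⊤:ℕ∞) (H ε))
    (hHsupp : ∀ ε ∈ Ioc (0:ℝ) 1, Function.support (H ε) ⊆ S₁ ×ˢ S₂)
    (hHneg : IsNegligible (prodDirs m p) H)
    (K : ℝ → (Fin p → ℝ) × (Fin n → ℝ) → ℂ)
    (hKsm : ∀ ε ∈ Ioc (0:ℝ) 1, ContDiff ℝ (⊤:ℕ∞) (K ε))
    (hKsupp : ∀ ε ∈ Ioc (0:ℝ) 1, Function.support (K ε) ⊆ S₂ ×ˢ S₃)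
    (hKmod : IsModerate (prodDirs p n) K)
    (L : ℝ → (Fin m → ℝ) × (Fin n → ℝ) → ℂ)
    (hL : ∀ ε x y, L ε (x, y) = ∫ ξ in S₂, H ε (x, ξ) * K ε (ξ, y)) :
    (∀ ε ∈ Ioc (0:ℝ) 1, ContDiff ℝ (⊤:ℕ∞) (L ε)) ∧ IsNegligible (prodDirs m n) L := by
  have hLeq : ∀ ε ∈ Ioc (0:ℝ) 1, L ε
      = fun z : (Fin m → ℝ) × (Fin n → ℝ) => ∫ ξ, H ε (z.1, ξ) * K ε (ξ, z.2) := by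
    intro ε hε
    funext z
    have h1 : L ε z = L ε (z.1, z.2) := rfl
    rw [h1, hL ε z.1 z.2]
    exact setIntegral_eq_integral_of_forall_compl_eq_zero
      (fun ξ hξ => prodmul_zero_off (hHsupp ε hε) z ξ hξ)
  constructor
  · intro ε hε
    rw [hLeq ε hε]
    exact contDiff_param_integral hS₂
      (contDiff_uncurry_prodmul (hHsm ε hε) (hKsm ε hε)) (prodmul_zero_off (hHsupp ε hε))
  · intro A hA l pw
    obtain ⟨hA₁, hA₂⟩ : IsCompact (Prod.fst '' A) ∧ IsCompact (Prod.snd '' A) :=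
      ⟨hA.image continuous_fst, hA.image continuous_snd⟩
    obtain ⟨q, C_K, hCK, ε₀K, hε₀K, hK_bd⟩ := hKmod (S₂ ×ˢ (Prod.snd '' A)) (hS₂.prod hA₂) l
    obtain ⟨C_H, hCH, ε₀H, hε₀H, hH_bd⟩ := hHneg ((Prod.fst '' A) ×ˢ S₂) (hA₁.prod hS₂) l (pw + q)
    set V := (volume S₂).toReal with hVdef
    have hV : 0 ≤ V := ENNReal.toReal_nonneg
    refine ⟨C_H * C_K * (V + 1), by positivity, min ε₀H ε₀K,
      ⟨lt_min hε₀H.1 hε₀K.1, le_trans (min_le_left _ _) hε₀H.2⟩, ?_⟩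
    intro ε hε hle
    have hεpos : (0:ℝ) < ε := hε.1
    have hεH := hH_bd ε hε (le_trans hle (min_le_left _ _))
    have hεK := hK_bd ε hε (le_trans hle (min_le_right _ _))
    have pHnn := pSemi_nonneg (prodDirs m p) ((Prod.fst '' A) ×ˢ S₂) l (H ε)
    have pKnn := pSemi_nonneg (prodDirs p n) (S₂ ×ˢ (Prod.snd '' A)) l (K ε)
    unfold pSemi
    apply Real.sSup_le
    · rintro r ⟨vs, hlen, hmem, z, hz, rfl⟩
      rw [hLeq ε hε]
      obtain ⟨as, bs, hab, has, hbs, heq⟩ := main_ind hS₁ hS₂ vs hmem (H ε) (hHsm ε hε)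
        (hHsupp ε hε) (K ε) (hKsm ε hε)
      rw [heq]
      beta_reduce
      have hsupp' : ∀ ξ, ξ ∉ S₂ →
          itDeriv as (H ε) (z.1, ξ) * itDeriv bs (K ε) (ξ, z.2) = 0 := fun ξ hξ =>
        prodmul_zero_off (support_itDeriv as (hS₁.isClosed.prod hS₂.isClosed) (hHsupp ε hε))
          z ξ hξ
      rw [← setIntegral_eq_integral_of_forall_compl_eq_zero hsupp']
      have hAS : AEStronglyMeasurable
          (fun ξ => itDeriv as (H ε) (z.1, ξ) * itDeriv bs (K ε) (ξ, z.2))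
          (volume.restrict S₂) := by
        apply Continuous.aestronglyMeasurable
        exact ((contDiff_itDeriv as (hHsm ε hε)).continuous.comp
            (continuous_const.prodMk continuous_id)).mul
          ((contDiff_itDeriv bs (hKsm ε hε)).continuous.comp
            (continuous_id.prodMk continuous_const))
      have hbound : ∀ ξ ∈ S₂, ‖itDeriv as (H ε) (z.1, ξ) * itDeriv bs (K ε) (ξ, z.2)‖
          ≤ pSemi (prodDirs m p) ((Prod.fst '' A) ×ˢ S₂) l (H ε)
            * pSemi (prodDirs p n) (S₂ ×ˢ (Prod.snd '' A)) l (K ε) := by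
        intro ξ hξ
        rw [norm_mul]
        apply mul_le_mul
        · exact le_pSemi (prodDirs_finite m p) (hA₁.prod hS₂) (hHsm ε hε)
            (by omega) has ⟨Set.mem_image_of_mem _ hz, hξ⟩
        · exact le_pSemi (prodDirs_finite p n) (hS₂.prod hA₂) (hKsm ε hε)
            (by omega) hbs ⟨hξ, Set.mem_image_of_mem _ hz⟩
        · exact norm_nonneg _
        · exact pHnn
      have hnorm := norm_setIntegral_le_of_norm_le_const (hS₂.measure_lt_top (μ := volume)) hbound
      refine le_trans hnorm ?_
      have h1 : pSemi (prodDirs m p) ((Prod.fst '' A) ×ˢ S₂) l (H ε)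
            * pSemi (prodDirs p n) (S₂ ×ˢ (Prod.snd '' A)) l (K ε)
          ≤ (C_H * ε ^ (pw + q)) * (C_K * ε ^ (-(q:ℤ))) :=
        mul_le_mul hεH hεK pKnn (by positivity)
      have h2 : (C_H * ε ^ (pw + q)) * (C_K * ε ^ (-(q:ℤ))) * V
          = (C_H * C_K * V) * ε ^ pw := by
        have hq : (ε:ℝ) ^ q ≠ 0 := pow_ne_zero _ (ne_of_gt hεpos)
        rw [zpow_neg, zpow_natCast, pow_add]
        field_simp
      calc pSemi (prodDirs m p) ((Prod.fst '' A) ×ˢ S₂) l (H ε)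
            * pSemi (prodDirs p n) (S₂ ×ˢ (Prod.snd '' A)) l (K ε) * V
          ≤ (C_H * ε ^ (pw + q)) * (C_K * ε ^ (-(q:ℤ))) * V :=
            mul_le_mul_of_nonneg_right h1 hV
        _ = (C_H * C_K * V) * ε ^ pw := h2
        _ ≤ C_H * C_K * (V + 1) * ε ^ pw := by
            apply mul_le_mul_of_nonneg_right _ (by positivity)
            nlinarith
    · positivity
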